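/- arXiv:1802.06546 — 6 statements merged into one kernel-verified Lean document; each statement's English description precedes it below -/
import Mathlib

section
/- Let m1, m2 be positive integers with gcd(m1,m2)=1 and m2 even, and let α ∈ ℝ. For t ∈ [0,2π), define A(t) = {s ∈ [0,2π) : ℓ(s) = ℓ(t)}. Then #A(t) = m2 if t = lπ/(m1 m2) with 0 ≤ l < 2 m1 m2 and l ≡ 0 (mod m1); #A(t) = 2 if t = lπ/(m1 m2) with 0 ≤ l < 2 m1 m2 and l ≢ 0 (mod m1); and #A(t) = 1 for all other t ∈ [0,2π). -/
open Real

noncomputable def lissajous (m1 m2 : ℕ) (α : ℝ) (t : ℝ) : ℝ × ℝ × ℝ :=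
  (Real.sin (m2 * t) * Real.cos (m1 * t - α * π),
   Real.sin (m2 * t) * Real.sin (m1 * t - α * π),
   Real.cos (m2 * t))

/-!
In spherical coordinates `ℓ(t)` has polar angle `m₂ t` and azimuth `m₁ t - απ`. Two
(polar, azimuthal) pairs give the same point of the sphere iff the polar angles agree and either
lie at a pole or the azimuths agree too, or the polar angles are opposite and the azimuths differ
by `π`. At a pole the fibre consists of the `m₂` solutions of `m₂ s ≡ m₂ t (mod 2π)`. Elsewhere,
since `gcd(m₁, m₂) = 1`, agreeing pairs force `s = t`, and the antipodal alternative has at most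
one solution; by the Chinese remainder theorem in `ℝ/2πℤ` (where `m₂ π ≡ 0` as `m₂` is even) it
has one exactly when `sin (m₁ m₂ t) = 0`, i.e. when `t` is a multiple of `π / (m₁ m₂)`.
-/

open Set

section AddCommGroup

variable {G : Type*} [AddCommGroup G] {m n : ℕ}

theorem eq_of_nsmul_eq_of_nsmul_eq_of_coprime (hmn : m.Coprime n) {x y : G}
    (hm : m • x = m • y) (hn : n • x = n • y) : x = y := by
  rw [← sub_eq_zero, ← nsmul_eq_zero_iff_of_coprime hmn, nsmul_sub, nsmul_sub, sub_eq_zero,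
    sub_eq_zero]
  exact ⟨hm, hn⟩

theorem exists_nsmul_eq_and_nsmul_eq_of_coprime (hmn : m.Coprime n) {a b : G}
    (hab : m • a = n • b) : ∃ x : G, n • x = a ∧ m • x = b := by
  have hbez : (m : ℤ) * m.gcdA n + n * m.gcdB n = 1 := by
    rw [← Nat.gcd_eq_gcd_ab, hmn.gcd_eq_one, Nat.cast_one]
  rw [← natCast_zsmul, ← natCast_zsmul] at hab
  refine ⟨m.gcdA n • b + m.gcdB n • a, ?_, ?_⟩
  · rw [← natCast_zsmul]
    linear_combination (norm := module) -(m.gcdA n • hab) + hbez • a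
  · rw [← natCast_zsmul]
    linear_combination (norm := module) m.gcdB n • hab + hbez • b

end AddCommGroup

namespace Real.Angle

theorem coe_injOn_Ico : InjOn ((↑) : ℝ → Angle) (Ico 0 (2 * π)) := by
  have : Fact (0 < 2 * π) := ⟨by positivity⟩
  intro x hx y hy hxy
  exact (AddCircle.coe_eq_coe_iff_of_mem_Ico (p := 2 * π) (a := 0) (by simpa using hx)
    (by simpa using hy)).1 hxy

theorem exists_mem_Ico_coe_eq (θ : Angle) : ∃ s ∈ Ico 0 (2 * π), (s : Angle) = θ := by
  have : Fact (0 < 2 * π) := ⟨by positivity⟩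
  exact ⟨AddCircle.equivIco (2 * π) 0 θ, by simpa using (AddCircle.equivIco (2 * π) 0 θ).2,
    AddCircle.coe_equivIco⟩

theorem eq_of_cos_eq_of_sin_eq {θ ψ : Angle} (hcos : θ.cos = ψ.cos) (hsin : θ.sin = ψ.sin) :
    θ = ψ := by
  induction θ using Real.Angle.induction_on
  induction ψ using Real.Angle.induction_on
  exact cos_sin_inj (by simpa using hcos) (by simpa using hsin)

theorem ncard_setOf_mem_Ico_nsmul_coe_eq {n : ℕ} (hn : 0 < n) (θ : Angle) :
    {s ∈ Ico 0 (2 * π) | n • (s : Angle) = θ}.ncard = n := by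
  obtain ⟨c, ⟨hc0, hc⟩, rfl⟩ := exists_mem_Ico_coe_eq θ
  have hn' : (0 : ℝ) < n := by exact_mod_cast hn
  have hset : {s ∈ Ico 0 (2 * π) | n • (s : Angle) = c} =
      (fun j : ℤ => (c + 2 * π * j) / n) '' Ico 0 n := by
    ext s
    simp only [mem_ofPred_eq, mem_image, mem_Ico, ← coe_nsmul, nsmul_eq_mul,
      angle_eq_iff_two_pi_dvd_sub]
    constructor
    · rintro ⟨⟨hs0, hs⟩, k, hk⟩
      have hk0 : 2 * π * (-1) < 2 * π * k := by nlinarith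
      have hkn : 2 * π * k < 2 * π * n := by nlinarith
      refine ⟨k, ⟨?_, ?_⟩, ?_⟩
      · have : (-1 : ℤ) < k := by exact_mod_cast lt_of_mul_lt_mul_left hk0 (by positivity)
        omega
      · exact_mod_cast lt_of_mul_lt_mul_left hkn (by positivity)
      · field_simp
        linarith
    · rintro ⟨j, ⟨hj0, hjn⟩, rfl⟩
      have hj0' : (0 : ℝ) ≤ j := by exact_mod_cast hj0
      have hjn' : (j : ℝ) + 1 ≤ n := by exact_mod_cast hjn
      refine ⟨⟨by positivity, ?_⟩, j, ?_⟩
      · rw [div_lt_iff₀ hn']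
        nlinarith
      · field_simp
        ring
  rw [hset, ncard_image_of_injective _ ?_]
  · rw [ncard_eq_toFinset_card']
    simp
  · intro i j hij
    field_simp at hij
    exact_mod_cast mul_left_cancel₀ (by positivity : 2 * π ≠ 0)
      (by linarith : 2 * π * i = 2 * π * j)

theorem exists_nsmul_eq_neg_and_nsmul_eq_add_pi_iff {m n : ℕ} (hmn : m.Coprime n)
    (hn : Even n) (θ : Angle) :
    (∃ x : Angle, n • x = -(n • θ) ∧ m • x = m • θ + π) ↔ ((m * n) • θ).sin = 0 := by
  have hnπ : n • (π : Angle) = 0 := by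
    obtain ⟨k, rfl⟩ := hn
    rw [← two_mul, mul_nsmul, two_nsmul_coe_pi, nsmul_zero]
  have hcompat : m • -(n • θ) = n • (m • θ + π) ↔ (2 : ℕ) • ((m * n) • θ) = 0 := by
    rw [nsmul_add, hnπ, add_zero, smul_neg, neg_eq_iff_add_eq_zero, smul_smul, smul_smul,
      mul_comm n m, two_nsmul]
  rw [← two_nsmul_eq_zero_iff.trans sin_eq_zero_iff.symm, ← hcompat]
  constructor
  · rintro ⟨x, hnx, hmx⟩
    rw [← hnx, ← hmx, smul_smul, smul_smul, mul_comm]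
  · exact exists_nsmul_eq_and_nsmul_eq_of_coprime hmn

end Real.Angle

theorem Real.sin_nat_mul_pi_div_eq_zero_iff {l m : ℕ} (hm : m ≠ 0) :
    Real.sin (l * π / m) = 0 ↔ m ∣ l := by
  rw [Real.sin_eq_zero_iff]
  constructor
  · rintro ⟨k, hk⟩
    field_simp at hk
    have hkm : (k * m : ℤ) = l := by exact_mod_cast hk
    exact Int.natCast_dvd_natCast.1 ⟨k, by rw [← hkm, mul_comm]⟩
  · rintro ⟨k, rfl⟩
    exact ⟨k, by push_cast; field_simp⟩

theorem exists_nat_lt_of_sin_mul_eq_zero {N : ℕ} (hN : 0 < N) {t : ℝ}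
    (ht : t ∈ Ico 0 (2 * π)) (h : Real.sin (N * t) = 0) :
    ∃ l : ℕ, l < 2 * N ∧ t = l * π / N := by
  obtain ⟨k, hk⟩ := Real.sin_eq_zero_iff.1 h
  have hN' : (0 : ℝ) < N := by exact_mod_cast hN
  have hk0 : (0 : ℝ) ≤ k := le_of_mul_le_mul_right (by rw [hk]; nlinarith [ht.1]) pi_pos
  lift k to ℕ using (by exact_mod_cast hk0)
  push_cast at hk
  refine ⟨k, ?_, ?_⟩
  · exact_mod_cast lt_of_mul_lt_mul_right
      (by rw [hk]; nlinarith [ht.2] : (k : ℝ) * π < (2 * N) * π) pi_pos.le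
  · field_simp
    linarith

noncomputable def sphericalPoint (θ φ : Real.Angle) : ℝ × ℝ × ℝ :=
  (θ.sin * φ.cos, θ.sin * φ.sin, θ.cos)

theorem sphericalPoint_eq_iff_of_sin_eq_zero {θ θ' : Real.Angle} (φ φ' : Real.Angle)
    (h : θ.sin = 0) : sphericalPoint θ' φ' = sphericalPoint θ φ ↔ θ' = θ := by
  simp only [sphericalPoint, Prod.mk.injEq, h, zero_mul]
  constructor
  · rintro ⟨hc, hs, hcos⟩
    have hsq : θ'.sin ^ 2 = 0 := by
      linear_combination (θ'.sin * φ'.cos) * hc + (θ'.sin * φ'.sin) * hs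
        - θ'.sin ^ 2 * φ'.cos_sq_add_sin_sq
    exact Real.Angle.eq_of_cos_eq_of_sin_eq hcos ((pow_eq_zero_iff two_ne_zero).1 hsq ▸ h.symm)
  · rintro rfl
    simp [h]

theorem sphericalPoint_eq_iff_of_sin_ne_zero {θ θ' φ φ' : Real.Angle} (h : θ.sin ≠ 0) :
    sphericalPoint θ' φ' = sphericalPoint θ φ ↔ θ' = θ ∧ φ' = φ ∨ θ' = -θ ∧ φ' = φ + π := by
  simp only [sphericalPoint, Prod.mk.injEq]
  constructor
  · rintro ⟨hc, hs, hcos⟩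
    rcases Real.Angle.cos_eq_iff_eq_or_eq_neg.1 hcos with rfl | rfl
    · exact Or.inl ⟨rfl, Real.Angle.eq_of_cos_eq_of_sin_eq (mul_left_cancel₀ h hc)
        (mul_left_cancel₀ h hs)⟩
    · rw [Real.Angle.sin_neg, neg_mul] at hc hs
      refine Or.inr ⟨rfl, Real.Angle.eq_of_cos_eq_of_sin_eq ?_ ?_⟩
      · rw [Real.Angle.cos_add_pi]
        exact mul_left_cancel₀ h (by linarith)
      · rw [Real.Angle.sin_add_pi]
        exact mul_left_cancel₀ h (by linarith)
  · rintro (⟨rfl, rfl⟩ | ⟨rfl, rfl⟩)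
    · simp
    · simp [Real.Angle.sin_add_pi, Real.Angle.cos_add_pi]

theorem lissajous_eq_sphericalPoint (m1 m2 : ℕ) (α t : ℝ) :
    lissajous m1 m2 α t =
      sphericalPoint (m2 • (t : Real.Angle)) (m1 • (t : Real.Angle) - ↑(α * π)) := by
  simp only [lissajous, sphericalPoint, ← Real.Angle.coe_nsmul, ← Real.Angle.coe_sub,
    Real.Angle.sin_coe, Real.Angle.cos_coe, nsmul_eq_mul]

section Lissajous

variable {m1 m2 : ℕ} {α t : ℝ}

theorem ncard_lissajous_fibre_of_sin_eq_zero (hm2 : 0 < m2) (h : Real.sin (m2 * t) = 0) :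
    {s ∈ Ico 0 (2 * π) | lissajous m1 m2 α s = lissajous m1 m2 α t}.ncard = m2 := by
  have h' : (m2 • (t : Real.Angle)).sin = 0 := by
    rwa [← Real.Angle.coe_nsmul, Real.Angle.sin_coe, nsmul_eq_mul]
  simp only [lissajous_eq_sphericalPoint, sphericalPoint_eq_iff_of_sin_eq_zero _ _ h']
  exact Real.Angle.ncard_setOf_mem_Ico_nsmul_coe_eq hm2 _

theorem ncard_lissajous_fibre_of_sin_ne_zero (hcop : m1.Coprime m2) (heven : Even m2)
    (ht : t ∈ Ico 0 (2 * π)) (h : Real.sin (m2 * t) ≠ 0) :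
    {s ∈ Ico 0 (2 * π) | lissajous m1 m2 α s = lissajous m1 m2 α t}.ncard =
      if Real.sin (m1 * m2 * t) = 0 then 2 else 1 := by
  have h' : (m2 • (t : Real.Angle)).sin ≠ 0 := by
    rwa [← Real.Angle.coe_nsmul, Real.Angle.sin_coe, nsmul_eq_mul]
  set R := {s ∈ Ico 0 (2 * π) | m2 • (s : Real.Angle) = -(m2 • (t : Real.Angle)) ∧
    m1 • (s : Real.Angle) = m1 • (t : Real.Angle) + π}
  have hfibre : {s ∈ Ico 0 (2 * π) | lissajous m1 m2 α s = lissajous m1 m2 α t} =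
      insert t R := by
    ext s
    simp only [mem_ofPred_eq, mem_insert_iff, lissajous_eq_sphericalPoint,
      sphericalPoint_eq_iff_of_sin_ne_zero h', sub_left_inj, sub_add_eq_add_sub, R]
    constructor
    · rintro ⟨hs, ⟨h2, h1⟩ | hR⟩
      · exact Or.inl (Real.Angle.coe_injOn_Ico hs ht
          (eq_of_nsmul_eq_of_nsmul_eq_of_coprime hcop h1 h2))
      · exact Or.inr ⟨hs, hR⟩
    · rintro (rfl | ⟨hs, hR⟩)
      · exact ⟨ht, Or.inl ⟨rfl, rfl⟩⟩
      · exact ⟨hs, Or.inr hR⟩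
  have htR : t ∉ R := fun ⟨_, hneg, _⟩ => h' <| Real.Angle.sin_eq_zero_iff.2 <|
    Real.Angle.two_nsmul_eq_zero_iff.1 <| by rwa [two_nsmul, ← eq_neg_iff_add_eq_zero]
  have hR : R.Subsingleton := fun s ⟨hs, hs2, hs1⟩ s' ⟨hs', hs2', hs1'⟩ =>
    Real.Angle.coe_injOn_Ico hs hs'
      (eq_of_nsmul_eq_of_nsmul_eq_of_coprime hcop (hs1.trans hs1'.symm) (hs2.trans hs2'.symm))
  have hR_nonempty : R.Nonempty ↔ Real.sin (m1 * m2 * t) = 0 := by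
    rw [← Nat.cast_mul, ← nsmul_eq_mul, ← Real.Angle.sin_coe, Real.Angle.coe_nsmul,
      ← Real.Angle.exists_nsmul_eq_neg_and_nsmul_eq_add_pi_iff hcop heven]
    constructor
    · rintro ⟨s, -, hs⟩
      exact ⟨s, hs⟩
    · rintro ⟨x, hx⟩
      obtain ⟨s, hs, rfl⟩ := Real.Angle.exists_mem_Ico_coe_eq x
      exact ⟨s, hs, hx⟩
  rw [hfibre, ncard_insert_of_notMem htR hR.finite]
  split_ifs with h0
  · obtain ⟨s, hs⟩ := hR_nonempty.2 h0
    rw [hR.eq_singleton_of_mem hs, ncard_singleton]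
  · rw [not_nonempty_iff_eq_empty.1 (mt hR_nonempty.1 h0), ncard_empty]

end Lissajous

theorem stmt1 (m1 m2 : ℕ) (hm1 : 0 < m1) (hm2 : 0 < m2)
    (hgcd : Nat.gcd m1 m2 = 1) (heven : Even m2) (α t : ℝ)
    (ht : t ∈ Set.Ico (0:ℝ) (2 * π)) :
    ((∃ l : ℕ, l < 2 * m1 * m2 ∧ m1 ∣ l ∧ t = l * π / (m1 * m2)) →
      Set.ncard {s ∈ Set.Ico (0:ℝ) (2 * π) |
        lissajous m1 m2 α s = lissajous m1 m2 α t} = m2) ∧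
    ((∃ l : ℕ, l < 2 * m1 * m2 ∧ ¬ (m1 ∣ l) ∧ t = l * π / (m1 * m2)) →
      Set.ncard {s ∈ Set.Ico (0:ℝ) (2 * π) |
        lissajous m1 m2 α s = lissajous m1 m2 α t} = 2) ∧
    ((¬ ∃ l : ℕ, l < 2 * m1 * m2 ∧ t = l * π / (m1 * m2)) →
      Set.ncard {s ∈ Set.Ico (0:ℝ) (2 * π) |
        lissajous m1 m2 α s = lissajous m1 m2 α t} = 1) := by
  have hm1' : (m1 : ℝ) ≠ 0 := by positivity
  have hm2' : (m2 : ℝ) ≠ 0 := by positivity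
  have hm2t (l : ℕ) : (m2 : ℝ) * (l * π / (m1 * m2)) = l * π / m1 := by field_simp
  refine ⟨?_, ?_, ?_⟩
  · rintro ⟨l, -, hl, rfl⟩
    rw [ncard_lissajous_fibre_of_sin_eq_zero hm2]
    rwa [hm2t, Real.sin_nat_mul_pi_div_eq_zero_iff hm1.ne']
  · rintro ⟨l, -, hl, rfl⟩
    rw [ncard_lissajous_fibre_of_sin_ne_zero hgcd heven ht, if_pos]
    · rw [show (m1 : ℝ) * m2 * (l * π / (m1 * m2)) = l * π by field_simp]
      exact Real.sin_nat_mul_pi l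
    · rwa [hm2t, Ne, Real.sin_nat_mul_pi_div_eq_zero_iff hm1.ne']
  · intro hgrid
    have hsin : Real.sin (m1 * m2 * t) ≠ 0 := fun h0 => hgrid <| by
      simpa [mul_assoc] using
        exists_nat_lt_of_sin_mul_eq_zero (N := m1 * m2) (by positivity) ht (by simpa using h0)
    rw [ncard_lissajous_fibre_of_sin_ne_zero hgcd heven ht, if_neg hsin]
    intro h0
    obtain ⟨k, hk⟩ := Real.sin_eq_zero_iff.1 h0
    apply hsin
    rw [mul_assoc, ← hk, ← mul_assoc]
    exact_mod_cast Real.sin_int_mul_pi (m1 * k)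
end

section
/- Let m1, m2 be positive integers with m2 even. The set of spherical Lissajous nodes LS(m) = {x_i : i ∈ I(m)}, where x_i = (sin(i1π/m1)cos(i2π/m2), sin(i1π/m1)sin(i2π/m2), cos(i1π/m1)), has exactly (m1 − 1) m2 + 2 elements. -/
open Real

/-- The index set I(m) as a finset. -/
def indexSet (m1 m2 : ℕ) : Finset (ℕ × ℕ) :=
  (Finset.range (m1 + 1) ×ˢ Finset.range (2 * m2)).filter
    (fun i => ((i.1 = 0 ∨ i.1 = m1) → i.2 < m2) ∧ Even (i.1 + i.2))

/-- The spherical Lissajous node corresponding to an index. -/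
noncomputable def node (m1 m2 : ℕ) (i : ℕ × ℕ) : ℝ × ℝ × ℝ :=
  (Real.sin (i.1 * π / m1) * Real.cos (i.2 * π / m2),
   Real.sin (i.1 * π / m1) * Real.sin (i.2 * π / m2),
   Real.cos (i.1 * π / m1))

/-!
The poles absorb all indices with `i1 ∈ {0, m1}`, and both are attained (the south pole by
`(m1, m1 % 2)`, which lies in `I(m)` because `m2` is even, so `m2 ≥ 2`). Away from the poles
`sin (i1 π / m1) > 0`, so `x_i` determines `i1` through its `z`-coordinate (cosine is injective
on `[0, π]`) and then `i2 mod 2 m2` through the azimuth, which is a `2 m2`-th root of unity. The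
remaining indices `0 < i1 < m1`, `i2 < 2 m2`, `i1 + i2` even are `(m1 - 1) m2` many.
-/

lemma eq_of_cos_mul_pi_div_eq {k l m : ℕ} (hm : 0 < m) (hk : k ≤ m) (hl : l ≤ m)
    (h : cos (k * π / m) = cos (l * π / m)) : k = l := by
  have hm' : (0 : ℝ) < m := by exact_mod_cast hm
  have mem_Icc {n : ℕ} (hn : n ≤ m) : (n : ℝ) * π / m ∈ Set.Icc 0 π := by
    refine ⟨by positivity, (div_le_iff₀ hm').2 ?_⟩
    have : (n : ℝ) ≤ m := by exact_mod_cast hn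
    nlinarith [pi_pos]
  have := injOn_cos (mem_Icc hk) (mem_Icc hl) h
  rw [div_left_inj' hm'.ne', mul_left_inj' pi_ne_zero] at this
  exact_mod_cast this

lemma eq_of_cos_sin_mul_pi_div_eq {k l m : ℕ} (hm : 0 < m) (hk : k < 2 * m) (hl : l < 2 * m)
    (hc : cos (k * π / m) = cos (l * π / m)) (hs : sin (k * π / m) = sin (l * π / m)) :
    k = l := by
  have hζ := Complex.isPrimitiveRoot_exp (2 * m) (by omega)
  have pow_eq (n : ℕ) : Complex.exp (2 * π * Complex.I / (2 * m : ℕ)) ^ n =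
      cos (n * π / m) + sin (n * π / m) * Complex.I := by
    rw [← Complex.exp_nat_mul, Complex.ofReal_cos, Complex.ofReal_sin, ← Complex.exp_mul_I]
    congr 1
    push_cast
    field_simp
  exact hζ.pow_inj hk hl (by rw [pow_eq, pow_eq, hc, hs])

lemma node_zero_left (m1 m2 i2 : ℕ) : node m1 m2 (0, i2) = (0, 0, 1) := by
  simp [node]

lemma node_self_left {m1 : ℕ} (m2 i2 : ℕ) (hm1 : 0 < m1) :
    node m1 m2 (m1, i2) = (0, 0, -1) := by
  have : (m1 : ℝ) * π / m1 = π := by field_simp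
  simp [node, this]

lemma sin_mul_pi_div_pos {k m : ℕ} (hk : 0 < k) (hkm : k < m) : 0 < sin (k * π / m) := by
  have hk' : (0 : ℝ) < k := by exact_mod_cast hk
  have hkm' : (k : ℝ) < m := by exact_mod_cast hkm
  have hm : (0 : ℝ) < m := hk'.trans hkm'
  exact sin_pos_of_pos_of_lt_pi (by positivity) ((div_lt_iff₀ hm).2 (by nlinarith [pi_pos]))

def interiorIndexSet (m1 m2 : ℕ) : Finset (ℕ × ℕ) :=
  (Finset.Ioo 0 m1 ×ˢ Finset.range (2 * m2)).filter (fun i => Even (i.1 + i.2))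

lemma interiorIndexSet_subset_indexSet (m1 m2 : ℕ) :
    interiorIndexSet m1 m2 ⊆ indexSet m1 m2 := by
  intro i hi
  simp only [interiorIndexSet, indexSet, Finset.mem_filter, Finset.mem_product, Finset.mem_Ioo,
    Finset.mem_range, Nat.even_iff] at hi ⊢
  omega

lemma card_interiorIndexSet (m1 m2 : ℕ) : (interiorIndexSet m1 m2).card = (m1 - 1) * m2 := by
  calc (interiorIndexSet m1 m2).card = (Finset.Ioo 0 m1 ×ˢ Finset.range m2).card := by
        -- `i2 ↦ i2 / 2` forgets the parity of `i2`, which is fixed by that of `i1`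
        apply Finset.card_nbij' (fun i => (i.1, i.2 / 2)) (fun j => (j.1, 2 * j.2 + j.1 % 2)) <;>
          intro i <;>
          simp only [interiorIndexSet, Finset.coe_filter, Finset.coe_product, Finset.coe_Ioo,
            Finset.coe_range, Set.mem_ofPred_eq, Set.mem_prod, Set.mem_Ioo, Set.mem_Iio,
            Finset.mem_product, Finset.mem_Ioo, Finset.mem_range, Nat.even_iff, Prod.ext_iff,
            true_and] <;>
          omega
    _ = (m1 - 1) * m2 := by simp

lemma node_injOn_interiorIndexSet {m1 m2 : ℕ} (hm2 : 0 < m2) :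
    Set.InjOn (node m1 m2) (interiorIndexSet m1 m2) := by
  rintro ⟨a, b⟩ hab ⟨c, d⟩ hcd hnode
  simp only [interiorIndexSet, Finset.coe_filter, Finset.mem_product, Finset.mem_Ioo,
    Finset.mem_range, Set.mem_ofPred_eq] at hab hcd
  simp only [node, Prod.mk.injEq] at hnode
  obtain ⟨hx, hy, hz⟩ := hnode
  obtain rfl : a = c := eq_of_cos_mul_pi_div_eq (by omega) (by omega) (by omega) hz
  have hsin := (sin_mul_pi_div_pos hab.1.1.1 hab.1.1.2).ne'
  rw [eq_of_cos_sin_mul_pi_div_eq hm2 hab.1.2 hcd.1.2 (mul_left_cancel₀ hsin hx)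
    (mul_left_cancel₀ hsin hy)]

lemma node_ne_of_mem_interiorIndexSet {m1 m2 : ℕ} {i : ℕ × ℕ}
    (hi : i ∈ interiorIndexSet m1 m2) :
    node m1 m2 i ≠ (0, 0, 1) ∧ node m1 m2 i ≠ (0, 0, -1) := by
  simp only [interiorIndexSet, Finset.mem_filter, Finset.mem_product, Finset.mem_Ioo] at hi
  obtain ⟨⟨⟨hi0, him⟩, -⟩, -⟩ := hi
  have hm1 : 0 < m1 := hi0.trans him
  refine ⟨fun h => ?_, fun h => ?_⟩
  · have hz : cos (i.1 * π / m1) = cos ((0 : ℕ) * π / m1) := by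
      simpa [node] using congrArg (·.2.2) h
    exact hi0.ne' (eq_of_cos_mul_pi_div_eq hm1 him.le (Nat.zero_le m1) hz)
  · have hz : cos (i.1 * π / m1) = cos (m1 * π / m1) := by
      simpa [node, hm1.ne'] using congrArg (·.2.2) h
    exact him.ne (eq_of_cos_mul_pi_div_eq hm1 him.le le_rfl hz)

lemma image_node_indexSet {m1 m2 : ℕ} (hm1 : 0 < m1) (hm2 : 0 < m2) (heven : Even m2) :
    (indexSet m1 m2).image (node m1 m2) =
      insert (0, 0, 1) (insert (0, 0, -1) ((interiorIndexSet m1 m2).image (node m1 m2))) := by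
  have hm2_two : 2 ≤ m2 := by obtain ⟨t, rfl⟩ := heven; omega
  apply Finset.Subset.antisymm
  · simp only [Finset.image_subset_iff, Finset.mem_insert, Finset.mem_image]
    rintro ⟨a, b⟩ hab
    simp only [indexSet, Finset.mem_filter, Finset.mem_product, Finset.mem_range] at hab
    by_cases ha0 : a = 0
    · exact .inl (by rw [ha0, node_zero_left])
    by_cases ham : a = m1
    · exact .inr (.inl (by rw [ham, node_self_left _ _ hm1]))
    refine .inr (.inr ⟨(a, b), ?_, rfl⟩)
    simp only [interiorIndexSet, Finset.mem_filter, Finset.mem_product, Finset.mem_Ioo,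
      Finset.mem_range]
    exact ⟨⟨⟨by omega, by omega⟩, hab.1.2⟩, hab.2.2⟩
  · have south_mem : (m1, m1 % 2) ∈ indexSet m1 m2 := by
      simp only [indexSet, Finset.mem_filter, Finset.mem_product, Finset.mem_range, Nat.even_iff]
      omega
    refine Finset.insert_subset ?_ (Finset.insert_subset ?_ ?_)
    · exact Finset.mem_image.2 ⟨(0, 0), by simp [indexSet, hm2], node_zero_left _ _ _⟩
    · exact Finset.mem_image.2 ⟨_, south_mem, node_self_left _ _ hm1⟩
    · exact Finset.image_subset_image (interiorIndexSet_subset_indexSet m1 m2)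

theorem stmt6 (m1 m2 : ℕ) (hm1 : 0 < m1) (hm2 : 0 < m2) (heven : Even m2) :
    Set.ncard {x : ℝ × ℝ × ℝ | ∃ i ∈ indexSet m1 m2, x = node m1 m2 i} =
      (m1 - 1) * m2 + 2 := by
  have hset : {x : ℝ × ℝ × ℝ | ∃ i ∈ indexSet m1 m2, x = node m1 m2 i} =
      ↑((indexSet m1 m2).image (node m1 m2)) := by
    ext x
    simp [eq_comm]
  have north_notMem : ((0, 0, 1) : ℝ × ℝ × ℝ) ∉
      insert (0, 0, -1) ((interiorIndexSet m1 m2).image (node m1 m2)) := by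
    simp only [Finset.mem_insert, Finset.mem_image, not_or, not_exists, not_and]
    exact ⟨by norm_num, fun i hi h => (node_ne_of_mem_interiorIndexSet hi).1 h⟩
  have south_notMem :
      ((0, 0, -1) : ℝ × ℝ × ℝ) ∉ (interiorIndexSet m1 m2).image (node m1 m2) := by
    simp only [Finset.mem_image, not_exists, not_and]
    exact fun i hi h => (node_ne_of_mem_interiorIndexSet hi).2 h
  rw [hset, Set.ncard_coe_finset, image_node_indexSet hm1 hm2 heven,
    Finset.card_insert_of_notMem north_notMem, Finset.card_insert_of_notMem south_notMem,
    Finset.card_image_of_injOn (node_injOn_interiorIndexSet hm2), card_interiorIndexSet]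
end

section
/- Let m1, m2 be positive integers with m2 even, g = gcd(m1,m2), H = {0,…,2m1m2/g − 1}, R = {0,…,g−1}. For every (l,ρ) ∈ H × R there exist a unique v ∈ {−1,1} and a unique i ∈ I(m) such that i1 ≡ v l (mod 2m1) and i2 ≡ l − 2ρ m2/g − (1−v)m2/2 (mod 2m2). -/
lemma dvdEqZero {n x : ℤ} (hn : 0 < n) (hd : n ∣ x) (h1 : -n < x) (h2 : x < n) : x = 0 := by
  rcases hd with ⟨t, rfl⟩
  rcases lt_trichotomy t 0 with h | h | h
  · nlinarith
  · simp [h]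
  · nlinarith

lemma mixedFalse (m1 m2 : ℕ) (hm1 : 0 < m1) (hm2 : 0 < m2) (A : ℤ) (l : ℕ)
    (i1 i2 j1 j2 : ℕ)
    (hi : (i1, i2) ∈ indexSet m1 m2) (hj : (j1, j2) ∈ indexSet m1 m2)
    (h1 : (i1 : ℤ) ≡ 1 * l [ZMOD (2 * m1 : ℤ)])
    (h2 : (i2 : ℤ) ≡ (l : ℤ) - A - (1 - 1) * m2 / 2 [ZMOD (2 * m2 : ℤ)])
    (h3 : (j1 : ℤ) ≡ (-1) * l [ZMOD (2 * m1 : ℤ)])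
    (h4 : (j2 : ℤ) ≡ (l : ℤ) - A - (1 - (-1)) * m2 / 2 [ZMOD (2 * m2 : ℤ)]) :
    False := by
  simp only [indexSet, Finset.mem_filter, Finset.mem_product, Finset.mem_range] at hi hj
  obtain ⟨⟨hi1, hi2⟩, hib, -⟩ := hi
  obtain ⟨⟨hj1, hj2⟩, hjb, -⟩ := hj
  rw [show ((1:ℤ) - 1) * m2 / 2 = 0 by norm_num] at h2
  rw [show ((1:ℤ) - (-1)) * m2 / 2 = m2 by omega] at h4
  -- i1 + j1 ≡ 0 mod 2m1
  have hsum : ((i1 : ℤ) + j1) ≡ 1 * l + (-1) * l [ZMOD (2 * m1 : ℤ)] := h1.add h3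
  rw [show (1:ℤ) * l + (-1) * l = 0 by ring] at hsum
  have hd : (2 * (m1:ℤ)) ∣ ((i1:ℤ) + j1) := by
    have h := hsum.dvd
    rw [zero_sub] at h
    exact dvd_neg.mp h
  -- so i1, j1 ∈ {0, m1}
  have hbnd : i1 = 0 ∧ j1 = 0 ∨ i1 = m1 ∧ j1 = m1 := by
    rcases lt_or_ge ((i1:ℤ) + j1) (2 * m1) with h | h
    · have := dvdEqZero (by positivity) hd (by push_cast; omega) h
      left; constructor <;> omega
    · have : (i1:ℤ) + j1 = 2 * m1 := by
        have h1' : (i1:ℤ) ≤ m1 := by exact_mod_cast Nat.lt_succ_iff.mp hi1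
        have h2' : (j1:ℤ) ≤ m1 := by exact_mod_cast Nat.lt_succ_iff.mp hj1
        linarith
      right; constructor <;> omega
  have hi2' : i2 < m2 := hib (by omega)
  have hj2' : j2 < m2 := hjb (by omega)
  have h24 : ((i2:ℤ) - j2) ≡ ((l:ℤ) - A - 0) - ((l:ℤ) - A - m2) [ZMOD (2 * m2 : ℤ)] := h2.sub h4
  rw [show ((l:ℤ) - A - 0) - ((l:ℤ) - A - m2) = m2 by ring] at h24
  have hd2 : (2 * (m2:ℤ)) ∣ ((m2:ℤ) - ((i2:ℤ) - j2)) := h24.dvd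
  have := dvdEqZero (by positivity) hd2 (by push_cast; omega) (by push_cast; omega)
  omega

lemma uniqAux (m1 m2 : ℕ) (hm1 : 0 < m1) (hm2 : 0 < m2) (A : ℤ) (l : ℕ)
    (v w : ℤ) (i1 i2 j1 j2 : ℕ)
    (hv : v = 1 ∨ v = -1) (hw : w = 1 ∨ w = -1)
    (hi : (i1, i2) ∈ indexSet m1 m2) (hj : (j1, j2) ∈ indexSet m1 m2)
    (h1 : (i1 : ℤ) ≡ v * l [ZMOD (2 * m1 : ℤ)])
    (h2 : (i2 : ℤ) ≡ (l : ℤ) - A - (1 - v) * m2 / 2 [ZMOD (2 * m2 : ℤ)])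
    (h3 : (j1 : ℤ) ≡ w * l [ZMOD (2 * m1 : ℤ)])
    (h4 : (j2 : ℤ) ≡ (l : ℤ) - A - (1 - w) * m2 / 2 [ZMOD (2 * m2 : ℤ)]) :
    v = w ∧ i1 = j1 ∧ i2 = j2 := by
  by_cases hvw : v = w
  · subst hvw
    simp only [indexSet, Finset.mem_filter, Finset.mem_product, Finset.mem_range] at hi hj
    obtain ⟨⟨hi1, hi2⟩, -, -⟩ := hi
    obtain ⟨⟨hj1, hj2⟩, -, -⟩ := hj
    have e1 : (j1:ℤ) - i1 = 0 := by
      refine dvdEqZero (n := 2 * (m1:ℤ)) (by positivity) (h1.trans h3.symm).dvd ?_ ?_ <;>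
        · push_cast; omega
    have e2 : (j2:ℤ) - i2 = 0 := by
      refine dvdEqZero (n := 2 * (m2:ℤ)) (by positivity) (h2.trans h4.symm).dvd ?_ ?_ <;>
        · push_cast; omega
    refine ⟨rfl, by omega, by omega⟩
  · exfalso
    rcases hv with rfl | rfl <;> rcases hw with rfl | rfl
    · exact hvw rfl
    · exact mixedFalse m1 m2 hm1 hm2 A l i1 i2 j1 j2 hi hj h1 h2 h3 h4
    · exact mixedFalse m1 m2 hm1 hm2 A l j1 j2 i1 i2 hj hi h3 h4 h1 h2
    · exact hvw rfl

lemma exuniqAux {α : Sort*} {p : α → Prop} (he : ∃ x, p x)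
    (hu : ∀ y z, p y → p z → y = z) : ∃! x, p x := by
  obtain ⟨x, hx⟩ := he
  exact ⟨x, hx, fun y hy => hu y x hy hx⟩

lemma emodModEq (a n : ℤ) : a % n ≡ a [ZMOD n] := Int.emod_emod_of_dvd a dvd_rfl

lemma parityAux (m1 m2 : ℕ) (heven : Even m2) (v : ℤ) (hv : v = 1 ∨ v = -1)
    (l : ℕ) (A : ℤ) (hA : 2 ∣ A) (i1 i2 : ℕ)
    (h1 : (i1 : ℤ) ≡ v * l [ZMOD (2 * m1 : ℤ)])
    (h2 : (i2 : ℤ) ≡ (l : ℤ) - A - (1 - v) * m2 / 2 [ZMOD (2 * m2 : ℤ)]) :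
    Even (i1 + i2) := by
  obtain ⟨a, rfl⟩ := hA
  obtain ⟨b, hb⟩ := heven
  have d1 : (2 : ℤ) ∣ v * l - i1 := dvd_trans (dvd_mul_right (2:ℤ) m1) h1.dvd
  have d2 : (2 : ℤ) ∣ ((l : ℤ) - 2*a - (1 - v) * m2 / 2) - i2 :=
    dvd_trans (dvd_mul_right (2:ℤ) m2) h2.dvd
  rw [Nat.even_iff]
  rcases hv with rfl | rfl
  · rw [show ((1:ℤ) - 1) * m2 / 2 = 0 by norm_num] at d2
    omega
  · rw [show ((1:ℤ) - (-1)) * m2 / 2 = m2 by omega] at d2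
    omega

theorem stmt7 (m1 m2 : ℕ) (hm1 : 0 < m1) (hm2 : 0 < m2) (heven : Even m2)
    (g : ℕ) (hg : g = Nat.gcd m1 m2)
    (l ρ : ℕ) (hl : l < 2 * m1 * m2 / g) (hρ : ρ < g) :
    ∃! p : ℤ × (ℕ × ℕ), (p.1 = 1 ∨ p.1 = -1) ∧ p.2 ∈ indexSet m1 m2 ∧
      (p.2.1 : ℤ) ≡ p.1 * l [ZMOD (2 * m1 : ℤ)] ∧
      (p.2.2 : ℤ) ≡ (l : ℤ) - 2 * ρ * (m2 / g : ℕ) - (1 - p.1) * m2 / 2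
        [ZMOD (2 * m2 : ℤ)] := by
  set A : ℤ := 2 * (ρ:ℤ) * ((m2 / g : ℕ) : ℤ) with hAdef
  have hA2 : (2:ℤ) ∣ A := ⟨(ρ:ℤ) * ((m2 / g : ℕ) : ℤ), by rw [hAdef]; ring⟩
  apply exuniqAux
  · -- existence
    set r : ℕ := l % (2 * m1) with hrdef
    have hr2 : r < 2 * m1 := Nat.mod_lt _ (by omega)
    have hrl : (r : ℤ) ≡ (l : ℤ) [ZMOD (2 * m1 : ℤ)] := by
      have hc : ((r:ℕ) : ℤ) = (l : ℤ) % (2 * m1 : ℤ) := by rw [hrdef]; push_cast; ring_nf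
      rw [hc]; exact emodModEq _ _
    set s1 : ℤ := ((l:ℤ) - A) % (2 * m2) with hs1def
    set s2 : ℤ := ((l:ℤ) - A - m2) % (2 * m2) with hs2def
    have hn2 : (0:ℤ) < 2 * m2 := by positivity
    have hs1nn : 0 ≤ s1 := Int.emod_nonneg _ (by omega)
    have hs1lt : s1 < 2 * m2 := Int.emod_lt_of_pos _ hn2
    have hs2nn : 0 ≤ s2 := Int.emod_nonneg _ (by omega)
    have hs2lt : s2 < 2 * m2 := Int.emod_lt_of_pos _ hn2
    have hs1c : s1 ≡ (l:ℤ) - A [ZMOD (2 * m2 : ℤ)] := emodModEq _ _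
    have hs2c : s2 ≡ (l:ℤ) - A - m2 [ZMOD (2 * m2 : ℤ)] := emodModEq _ _
    -- memb helper
    have mem_imp : ∀ i1 i2 : ℕ, i1 ≤ m1 → i2 < 2*m2 → ((i1 = 0 ∨ i1 = m1) → i2 < m2) →
        Even (i1 + i2) → (i1, i2) ∈ indexSet m1 m2 := by
      intro i1 i2 a b c d
      simp only [indexSet, Finset.mem_filter, Finset.mem_product, Finset.mem_range]
      exact ⟨⟨by omega, b⟩, c, d⟩
    have e0 : (l:ℤ) - A - (1 - 1) * m2 / 2 = (l:ℤ) - A := by norm_num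
    have e1 : (l:ℤ) - A - (1 - (-1)) * m2 / 2 = (l:ℤ) - A - m2 := by
      rw [show ((1:ℤ) - (-1)) * m2 / 2 = m2 by omega]
    by_cases hb : r = 0 ∨ r = m1
    · -- boundary case: need i2 < m2; choose v accordingly
      have hneg : (r : ℤ) ≡ (-1) * l [ZMOD (2 * m1 : ℤ)] := by
        have h2r : (2 * (m1:ℤ)) ∣ 2 * r := by
          rcases hb with h | h
          · rw [h]; exact ⟨0, by norm_num⟩
          · simp [h]
        have h2l : (2 * (m1:ℤ)) ∣ ((-1) * l - r) := by
          have hdl := hrl.dvd  -- 2m1 ∣ l - r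
          obtain ⟨u, hu⟩ := hdl
          obtain ⟨u2, hu2⟩ := h2r
          exact ⟨-u - u2, by push_cast at hu hu2 ⊢; linarith⟩
        exact Int.modEq_iff_dvd.mpr h2l
      have hrle : r ≤ m1 := by rcases hb with h | h <;> omega
      by_cases hs : s1 < m2
      · refine ⟨(1, r, s1.toNat), Or.inl rfl, ?_, ?_, ?_⟩
        · show (r, s1.toNat) ∈ indexSet m1 m2
          refine mem_imp _ _ hrle (by omega) (fun _ => by omega) ?_
          refine parityAux m1 m2 heven 1 (Or.inl rfl) l A hA2 r s1.toNat ?_ ?_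
          · rw [one_mul]; exact hrl
          · rw [Int.toNat_of_nonneg hs1nn, e0]; exact hs1c
        · show (r : ℤ) ≡ 1 * l [ZMOD (2 * m1 : ℤ)]
          rw [one_mul]; exact hrl
        · show ((s1.toNat : ℕ) : ℤ) ≡ (l:ℤ) - A - (1 - 1) * m2 / 2 [ZMOD (2 * m2 : ℤ)]
          rw [Int.toNat_of_nonneg hs1nn, e0]; exact hs1c
      · -- then s2 < m2
        have hdich : s2 < m2 := by
          have h12 : s1 - s2 ≡ ((l:ℤ) - A) - ((l:ℤ) - A - m2) [ZMOD (2 * m2 : ℤ)] :=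
            hs1c.sub hs2c
          rw [show ((l:ℤ) - A) - ((l:ℤ) - A - m2) = m2 by ring] at h12
          have hd2 : (2 * (m2:ℤ)) ∣ ((m2:ℤ) - (s1 - s2)) := h12.dvd
          have := dvdEqZero hn2 hd2 (by omega) (by omega)
          omega
        refine ⟨(-1, r, s2.toNat), Or.inr rfl, ?_, ?_, ?_⟩
        · show (r, s2.toNat) ∈ indexSet m1 m2
          refine mem_imp _ _ hrle (by omega) (fun _ => by omega) ?_
          refine parityAux m1 m2 heven (-1) (Or.inr rfl) l A hA2 r s2.toNat hneg ?_
          rw [Int.toNat_of_nonneg hs2nn, e1]; exact hs2c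
        · exact hneg
        · show ((s2.toNat : ℕ) : ℤ) ≡ (l:ℤ) - A - (1 - (-1)) * m2 / 2 [ZMOD (2 * m2 : ℤ)]
          rw [Int.toNat_of_nonneg hs2nn, e1]; exact hs2c
    · push_neg at hb
      obtain ⟨hb0, hbm⟩ := hb
      rcases Nat.lt_or_ge r m1 with hlt | hge
      · refine ⟨(1, r, s1.toNat), Or.inl rfl, ?_, ?_, ?_⟩
        · show (r, s1.toNat) ∈ indexSet m1 m2
          refine mem_imp _ _ hlt.le (by omega) (fun h => by omega) ?_
          refine parityAux m1 m2 heven 1 (Or.inl rfl) l A hA2 r s1.toNat ?_ ?_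
          · rw [one_mul]; exact hrl
          · rw [Int.toNat_of_nonneg hs1nn, e0]; exact hs1c
        · show (r : ℤ) ≡ 1 * l [ZMOD (2 * m1 : ℤ)]
          rw [one_mul]; exact hrl
        · show ((s1.toNat : ℕ) : ℤ) ≡ (l:ℤ) - A - (1 - 1) * m2 / 2 [ZMOD (2 * m2 : ℤ)]
          rw [Int.toNat_of_nonneg hs1nn, e0]; exact hs1c
      · -- m1 < r, use v = -1, i1 = 2*m1 - r
        have hmr : m1 < r := lt_of_le_of_ne hge (fun h => hbm h.symm)
        have hneg : ((2 * m1 - r : ℕ) : ℤ) ≡ (-1) * l [ZMOD (2 * m1 : ℤ)] := by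
          have hc : ((2 * m1 - r : ℕ) : ℤ) = 2 * (m1:ℤ) - r := by
            push_cast [Nat.cast_sub hr2.le]; ring
          rw [hc]
          have : (2 * (m1:ℤ)) ∣ ((-1) * l - (2 * (m1:ℤ) - r)) := by
            obtain ⟨u, hu⟩ := hrl.dvd
            exact ⟨-u - 1, by push_cast at hu ⊢; linarith⟩
          exact Int.modEq_iff_dvd.mpr this
        refine ⟨(-1, 2 * m1 - r, s2.toNat), Or.inr rfl, ?_, ?_, ?_⟩
        · show (2 * m1 - r, s2.toNat) ∈ indexSet m1 m2
          refine mem_imp _ _ (by omega) (by omega) (fun h => by omega) ?_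
          refine parityAux m1 m2 heven (-1) (Or.inr rfl) l A hA2 _ s2.toNat hneg ?_
          rw [Int.toNat_of_nonneg hs2nn, e1]; exact hs2c
        · exact hneg
        · show ((s2.toNat : ℕ) : ℤ) ≡ (l:ℤ) - A - (1 - (-1)) * m2 / 2 [ZMOD (2 * m2 : ℤ)]
          rw [Int.toNat_of_nonneg hs2nn, e1]; exact hs2c
  · -- uniqueness
    rintro ⟨v, i1, i2⟩ ⟨w, j1, j2⟩ ⟨hv, hi, h1, h2⟩ ⟨hw, hj, h3, h4⟩
    obtain ⟨ev, ei1, ei2⟩ := uniqAux m1 m2 hm1 hm2 A l v w i1 i2 j1 j2 hv hw hi hj h1 h2 h3 h4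
    simp [ev, ei1, ei2]
end

section
/- Let m1, m2 be positive integers with m2 even and γ = (γ1,γ2) ∈ ℤ². Define χ_γ(i) = cos(γ1 i1 π/m1) e^{i γ2 i2 π/m2} if γ2 is even, and χ_γ(i) = i·sin(γ1 i1 π/m1) e^{i γ2 i2 π/m2} if γ2 is odd. If (1/(m1m2)) Σ_{i ∈ I(m)} χ_γ(i) ≠ 0, then there exist integers h1, h2 with γ1 = h1 m1, γ2 = h2 m2 and h1 + h2 even; and conversely, if such h1, h2 exist then (1/(m1m2)) Σ_{i ∈ I(m)} χ_γ(i) = 1. -/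
open Real Complex

/-- The discretized parity-modified Fourier basis functions χ_γ. -/
noncomputable def chi (m1 m2 : ℕ) (γ : ℤ × ℤ) (i : ℕ × ℕ) : ℂ :=
  if Even γ.2 then
    (Real.cos ((γ.1 : ℝ) * i.1 * π / m1) : ℂ) *
      Complex.exp (Complex.I * γ.2 * i.2 * (π : ℂ) / m2)
  else
    Complex.I * (Real.sin ((γ.1 : ℝ) * i.1 * π / m1) : ℂ) *
      Complex.exp (Complex.I * γ.2 * i.2 * (π : ℂ) / m2)

/-!
Put `z₁ = exp (iπγ₁/m₁)` and `z₂ = exp (iπγ₂/m₂)`, roots of unity of orders dividing `2m₁`, `2m₂`.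
Expanding cos and sin, `χ_γ(i) = (z₁^i₁ z₂^i₂ + z₁^(-i₁) z₂^(i₂+m₂)) / 2`, and the second term is the
first one evaluated at the image of `i` under the involution `(i₁, i₂) ↦ (-i₁, i₂ + m₂)` of
`ℤ/2m₁ × ℤ/2m₂`. As `m₂` is even this involution preserves the parity of `i₁ + i₂`, and `I(m)` meets
each of its orbits on the even points exactly once. Hence the sum over `I(m)` is half the sum of
`z₁^a z₂^b` over the even points, which, writing the parity condition as `(1 + (-1)^(a+b)) / 2`,
splits into geometric sums and equals `m₁ m₂ ([z₁ = z₂ = 1] + [z₁ = z₂ = -1])`. Finally `z_k = 1`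
(resp. `-1`) exactly when `γ_k` is an even (resp. odd) multiple of `m_k`.
-/

lemma geom_sum_eq_ite_of_pow_eq_one {z : ℂ} {n : ℕ} (hz : z ^ n = 1) :
    ∑ j ∈ Finset.range n, z ^ j = if z = 1 then (n : ℂ) else 0 := by
  split_ifs with h
  · simp [h]
  · rw [geom_sum_eq h, hz, sub_self, zero_div]

lemma exp_I_mul_pi_div_pow_self {m : ℕ} (hm : m ≠ 0) (g : ℤ) :
    exp (I * π * g / m) ^ m = (-1) ^ g := by
  rw [← Complex.exp_nat_mul, ← Complex.exp_pi_mul_I, ← Complex.exp_int_mul]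
  congr 1
  field_simp

lemma exp_I_mul_pi_div_pow_two_mul {m : ℕ} (hm : m ≠ 0) (g : ℤ) :
    exp (I * π * g / m) ^ (2 * m) = 1 := by
  rw [pow_mul', exp_I_mul_pi_div_pow_self hm, ← zpow_natCast, ← zpow_mul, mul_comm, zpow_mul]
  norm_num

lemma exp_I_mul_pi_div_eq_one_iff {m : ℕ} (hm : m ≠ 0) (g : ℤ) :
    exp (I * π * g / m) = 1 ↔ ∃ h : ℤ, g = h * m ∧ Even h := by
  have hπ : (π : ℂ) ≠ 0 := Complex.ofReal_ne_zero.mpr Real.pi_ne_zero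
  rw [Complex.exp_eq_one_iff]
  constructor
  · rintro ⟨n, hn⟩
    refine ⟨2 * n, ?_, even_two_mul n⟩
    have : (g : ℂ) = 2 * n * m := by
      field_simp at hn
      apply mul_left_cancel₀ (mul_ne_zero I_ne_zero hπ)
      linear_combination (I * π) * hn
    exact_mod_cast this
  · rintro ⟨_, rfl, n, rfl⟩
    exact ⟨n, by push_cast; field_simp; ring⟩

lemma exp_I_mul_pi_div_eq_neg_one_iff {m : ℕ} (hm : m ≠ 0) (g : ℤ) :
    exp (I * π * g / m) = -1 ↔ ∃ h : ℤ, g = h * m ∧ Odd h := by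
  have hshift : exp (I * π * ((g + m : ℤ) : ℂ) / m) = -exp (I * π * g / m) := by
    rw [← mul_neg_one, ← Complex.exp_pi_mul_I, ← Complex.exp_add]
    congr 1
    push_cast
    field_simp
  rw [← neg_eq_iff_eq_neg, ← hshift, exp_I_mul_pi_div_eq_one_iff hm]
  constructor
  · rintro ⟨h, hh, he⟩
    exact ⟨h - 1, by linear_combination hh, by simpa [Int.odd_sub] using he⟩
  · rintro ⟨h, rfl, ho⟩
    exact ⟨h + 1, by ring, ho.add_one⟩

lemma exp_I_mul_pi_div_pow {m : ℕ} (g : ℤ) (k : ℕ) :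
    exp (I * π * g / m) ^ k = exp (I * g * k * π / m) := by
  rw [← Complex.exp_nat_mul]
  ring_nf

lemma chi_eq {m1 m2 : ℕ} (hm1 : m1 ≠ 0) (hm2 : m2 ≠ 0) (γ : ℤ × ℤ) {i1 : ℕ} (i2 : ℕ)
    (hi1 : i1 ≤ 2 * m1) :
    chi m1 m2 γ (i1, i2) =
      (exp (I * π * γ.1 / m1) ^ i1 * exp (I * π * γ.2 / m2) ^ i2 +
        exp (I * π * γ.1 / m1) ^ (2 * m1 - i1) * exp (I * π * γ.2 / m2) ^ (i2 + m2)) / 2 := by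
  unfold chi
  push_cast
  set z1 := exp (I * π * γ.1 / m1)
  set z2 := exp (I * π * γ.2 / m2)
  set θ : ℂ := γ.1 * i1 * π / m1
  have hpos : exp (θ * I) = z1 ^ i1 := by
    rw [exp_I_mul_pi_div_pow]
    congr 1
    ring
  have hneg : exp (-θ * I) = z1 ^ (2 * m1 - i1) := by
    rw [neg_mul, Complex.exp_neg, hpos, inv_eq_of_mul_eq_one_left]
    rw [← pow_add, Nat.sub_add_cancel hi1, exp_I_mul_pi_div_pow_two_mul hm1]
  have hz2 : exp (I * γ.2 * i2 * π / m2) = z2 ^ i2 := (exp_I_mul_pi_div_pow _ _).symm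
  have hshift : z2 ^ (i2 + m2) = (-1) ^ γ.2 * z2 ^ i2 := by
    rw [pow_add, exp_I_mul_pi_div_pow_self hm2, mul_comm]
  split_ifs with hγ
  · rw [hshift, hγ.neg_one_zpow, hz2, ← hpos, ← hneg]
    linear_combination (z2 ^ i2 / 2) * Complex.two_cos θ
  · rw [hshift, (Int.not_even_iff_odd.mp hγ).neg_one_zpow, hz2, ← hpos, ← hneg]
    linear_combination (I * z2 ^ i2 / 2) * Complex.two_sin θ
      + (exp (-θ * I) - exp (θ * I)) * z2 ^ i2 / 2 * Complex.I_mul_I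

def evenPoints (m1 m2 : ℕ) : Finset (ℕ × ℕ) :=
  (Finset.range (2 * m1) ×ˢ Finset.range (2 * m2)).filter (fun i => Even (i.1 + i.2))

/-- `(i₁, i₂) ↦ (-i₁, i₂ + m₂)` on `ℤ/2m₁ × ℤ/2m₂`, on representatives in `[0, 2m₁) × [0, 2m₂)`. -/
def reflectShift (m1 m2 : ℕ) (i : ℕ × ℕ) : ℕ × ℕ :=
  (if i.1 = 0 then 0 else 2 * m1 - i.1, if i.2 < m2 then i.2 + m2 else i.2 - m2)

lemma mem_indexSet {m1 m2 : ℕ} {i : ℕ × ℕ} :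
    i ∈ indexSet m1 m2 ↔
      i.1 ≤ m1 ∧ i.2 < 2 * m2 ∧ ((i.1 = 0 ∨ i.1 = m1) → i.2 < m2) ∧ (i.1 + i.2) % 2 = 0 := by
  simp [indexSet, Nat.even_iff, and_assoc]

lemma mem_evenPoints {m1 m2 : ℕ} {i : ℕ × ℕ} :
    i ∈ evenPoints m1 m2 ↔ i.1 < 2 * m1 ∧ i.2 < 2 * m2 ∧ (i.1 + i.2) % 2 = 0 := by
  simp [evenPoints, Nat.even_iff, and_assoc]

lemma reflectShift_reflectShift {m1 m2 : ℕ} {i : ℕ × ℕ} (h1 : i.1 < 2 * m1) (h2 : i.2 < 2 * m2) :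
    reflectShift m1 m2 (reflectShift m1 m2 i) = i := by
  obtain ⟨i1, i2⟩ := i
  simp only [reflectShift, Prod.mk.injEq]
  constructor <;> split_ifs <;> omega

lemma sum_evenPoints_eq_sum_indexSet_add {m1 m2 : ℕ} (hm1 : m1 ≠ 0) (heven : Even m2)
    (F : ℕ × ℕ → ℂ) :
    ∑ i ∈ evenPoints m1 m2, F i =
      ∑ i ∈ indexSet m1 m2, F i + ∑ i ∈ indexSet m1 m2, F (reflectShift m1 m2 i) := by
  have hm2_mod : m2 % 2 = 0 := Nat.even_iff.mp heven
  have hsub : indexSet m1 m2 ⊆ evenPoints m1 m2 := by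
    intro i hi
    rw [mem_indexSet] at hi
    rw [mem_evenPoints]
    omega
  rw [← Finset.sum_sdiff hsub, add_comm]
  congr 1
  refine Finset.sum_nbij' (reflectShift m1 m2) (reflectShift m1 m2) ?_ ?_ ?_ ?_ ?_
  · rintro ⟨i1, i2⟩ hi
    simp only [Finset.mem_sdiff, mem_evenPoints, mem_indexSet] at hi ⊢
    simp only [reflectShift]
    split_ifs <;> omega
  · rintro ⟨i1, i2⟩ hi
    simp only [Finset.mem_sdiff, mem_evenPoints, mem_indexSet] at hi ⊢
    simp only [reflectShift]
    split_ifs <;> omega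
  · rintro i hi
    simp only [Finset.mem_sdiff, mem_evenPoints] at hi
    exact reflectShift_reflectShift hi.1.1 hi.1.2.1
  · rintro i hi
    simp only [mem_indexSet] at hi
    exact reflectShift_reflectShift (by omega) hi.2.1
  · rintro i hi
    simp only [Finset.mem_sdiff, mem_evenPoints] at hi
    rw [reflectShift_reflectShift hi.1.1 hi.1.2.1]

lemma sum_evenPoints_pow (m1 m2 : ℕ) (z1 z2 : ℂ) :
    ∑ i ∈ evenPoints m1 m2, z1 ^ i.1 * z2 ^ i.2 =
      ((∑ j ∈ Finset.range (2 * m1), z1 ^ j) * (∑ j ∈ Finset.range (2 * m2), z2 ^ j) +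
        (∑ j ∈ Finset.range (2 * m1), (-z1) ^ j) * (∑ j ∈ Finset.range (2 * m2), (-z2) ^ j)) / 2 := by
  have parity_filter : ∀ i : ℕ × ℕ, (if Even (i.1 + i.2) then z1 ^ i.1 * z2 ^ i.2 else 0) =
      (z1 ^ i.1 * z2 ^ i.2 + (-z1) ^ i.1 * (-z2) ^ i.2) / 2 := by
    intro i
    have hneg : (-z1) ^ i.1 * (-z2) ^ i.2 = (-1) ^ (i.1 + i.2) * (z1 ^ i.1 * z2 ^ i.2) := by
      rw [neg_pow, neg_pow, pow_add]
      ring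
    rcases Nat.even_or_odd (i.1 + i.2) with h | h
    · rw [if_pos h, hneg, h.neg_one_pow]
      ring
    · rw [if_neg (Nat.not_even_iff_odd.mpr h), hneg, h.neg_one_pow]
      ring
  rw [evenPoints, Finset.sum_filter, Finset.sum_congr rfl (fun i _ => parity_filter i),
    ← Finset.sum_div, Finset.sum_add_distrib, Finset.sum_mul_sum, Finset.sum_mul_sum,
    Finset.sum_product, Finset.sum_product]

lemma sum_indexSet_pow_add_reflect {m1 m2 : ℕ} (hm1 : m1 ≠ 0) (heven : Even m2) {z1 z2 : ℂ}
    (hz1 : z1 ^ (2 * m1) = 1) (hz2 : z2 ^ (2 * m2) = 1) :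
    ∑ i ∈ indexSet m1 m2, (z1 ^ i.1 * z2 ^ i.2 + z1 ^ (2 * m1 - i.1) * z2 ^ (i.2 + m2)) / 2 =
      if (z1 = 1 ∧ z2 = 1) ∨ (z1 = -1 ∧ z2 = -1) then (m1 * m2 : ℂ) else 0 := by
  have reflect : ∀ i ∈ indexSet m1 m2,
      z1 ^ (reflectShift m1 m2 i).1 * z2 ^ (reflectShift m1 m2 i).2 =
        z1 ^ (2 * m1 - i.1) * z2 ^ (i.2 + m2) := by
    rintro ⟨i1, i2⟩ hi
    rw [mem_indexSet] at hi
    have e1 : z1 ^ (if i1 = 0 then 0 else 2 * m1 - i1) = z1 ^ (2 * m1 - i1) := by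
      split_ifs with h0
      · rw [h0, Nat.sub_zero, hz1, pow_zero]
      · rfl
    have e2 : z2 ^ (if i2 < m2 then i2 + m2 else i2 - m2) = z2 ^ (i2 + m2) := by
      split_ifs with h0
      · rfl
      · rw [show i2 + m2 = i2 - m2 + 2 * m2 by omega, pow_add, hz2, mul_one]
    simp only [reflectShift, e1, e2]
  have hz1' : (-z1) ^ (2 * m1) = 1 := by rw [neg_pow, (even_two_mul m1).neg_one_pow, one_mul, hz1]
  have hz2' : (-z2) ^ (2 * m2) = 1 := by rw [neg_pow, (even_two_mul m2).neg_one_pow, one_mul, hz2]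
  rw [← Finset.sum_div, Finset.sum_add_distrib, ← Finset.sum_congr rfl reflect,
    ← sum_evenPoints_eq_sum_indexSet_add hm1 heven (fun i => z1 ^ i.1 * z2 ^ i.2),
    sum_evenPoints_pow, geom_sum_eq_ite_of_pow_eq_one hz1, geom_sum_eq_ite_of_pow_eq_one hz2,
    geom_sum_eq_ite_of_pow_eq_one hz1', geom_sum_eq_ite_of_pow_eq_one hz2']
  have hne : (-1 : ℂ) ≠ 1 := by norm_num
  simp only [neg_eq_iff_eq_neg]
  split_ifs <;> simp_all <;> ring

lemma exists_mul_mul_even_add_iff (a b m n : ℤ) :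
    (∃ h1 h2 : ℤ, a = h1 * m ∧ b = h2 * n ∧ Even (h1 + h2)) ↔
      ((∃ h, a = h * m ∧ Even h) ∧ (∃ h, b = h * n ∧ Even h)) ∨
        ((∃ h, a = h * m ∧ Odd h) ∧ (∃ h, b = h * n ∧ Odd h)) := by
  constructor
  · rintro ⟨h1, h2, rfl, rfl, hev⟩
    rcases Int.even_or_odd h1 with h | h
    · exact Or.inl ⟨⟨h1, rfl, h⟩, ⟨h2, rfl, (Int.even_add.mp hev).mp h⟩⟩
    · exact Or.inr ⟨⟨h1, rfl, h⟩, ⟨h2, rfl, add_sub_cancel_left h1 h2 ▸ hev.sub_odd h⟩⟩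
  · rintro (⟨⟨h1, rfl, he1⟩, ⟨h2, rfl, he2⟩⟩ | ⟨⟨h1, rfl, ho1⟩, ⟨h2, rfl, ho2⟩⟩)
    · exact ⟨h1, h2, rfl, rfl, he1.add he2⟩
    · exact ⟨h1, h2, rfl, rfl, ho1.add_odd ho2⟩

open Classical in
lemma sum_chi_eq_ite {m1 m2 : ℕ} (hm1 : m1 ≠ 0) (hm2 : m2 ≠ 0) (heven : Even m2) (γ : ℤ × ℤ) :
    ∑ i ∈ indexSet m1 m2, chi m1 m2 γ i =
      if ∃ h1 h2 : ℤ, γ.1 = h1 * m1 ∧ γ.2 = h2 * m2 ∧ Even (h1 + h2) then (m1 * m2 : ℂ)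
      else 0 := by
  have hchi : ∀ i ∈ indexSet m1 m2, chi m1 m2 γ i =
      (exp (I * π * γ.1 / m1) ^ i.1 * exp (I * π * γ.2 / m2) ^ i.2 +
        exp (I * π * γ.1 / m1) ^ (2 * m1 - i.1) * exp (I * π * γ.2 / m2) ^ (i.2 + m2)) / 2 := by
    rintro ⟨i1, i2⟩ hi
    exact chi_eq hm1 hm2 γ i2 (by rw [mem_indexSet] at hi; omega)
  rw [Finset.sum_congr rfl hchi, sum_indexSet_pow_add_reflect hm1 heven
    (exp_I_mul_pi_div_pow_two_mul hm1 _) (exp_I_mul_pi_div_pow_two_mul hm2 _)]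
  simp only [exists_mul_mul_even_add_iff, exp_I_mul_pi_div_eq_one_iff hm1,
    exp_I_mul_pi_div_eq_one_iff hm2, exp_I_mul_pi_div_eq_neg_one_iff hm1,
    exp_I_mul_pi_div_eq_neg_one_iff hm2]

theorem stmt10 (m1 m2 : ℕ) (hm1 : 0 < m1) (hm2 : 0 < m2) (heven : Even m2)
    (γ : ℤ × ℤ) :
    ((1 / (m1 * m2 : ℂ)) * ∑ i ∈ indexSet m1 m2, chi m1 m2 γ i ≠ 0 →
      ∃ h1 h2 : ℤ, γ.1 = h1 * m1 ∧ γ.2 = h2 * m2 ∧ Even (h1 + h2)) ∧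
    ((∃ h1 h2 : ℤ, γ.1 = h1 * m1 ∧ γ.2 = h2 * m2 ∧ Even (h1 + h2)) →
      (1 / (m1 * m2 : ℂ)) * ∑ i ∈ indexSet m1 m2, chi m1 m2 γ i = 1) := by
  rw [sum_chi_eq_ite hm1.ne' hm2.ne' heven γ]
  refine ⟨fun hne => by_contra fun hγ => hne ?_, fun hγ => ?_⟩
  · rw [if_neg hγ, mul_zero]
  · rw [if_pos hγ, one_div_mul_cancel]
    exact mul_ne_zero (Nat.cast_ne_zero.mpr hm1.ne') (Nat.cast_ne_zero.mpr hm2.ne')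
end

section
/- For all γ, γ' ∈ ℤ², the discrete functions χ_γ on ℤ² satisfy the product formula χ_γ · conj(χ_{γ'}) = (1/2)(χ_{(γ1−γ1', γ2−γ2')} + (−1)^{γ2'} χ_{(γ1+γ1', γ2−γ2')}), where all functions are evaluated pointwise at (θ,φ) = (i1π/m1, i2π/m2). -/
/-!
Writing `e_(a,b)(θ, φ) = exp (i (a θ + b φ))`, both branches of the definition say
`X_(a,b) = (e_(a,b) + (-1)^b e_(-a,b)) / 2`, and `e_p · conj e_q = e_(p-q)`. Expanding the product
bilinearly gives four plane waves, which regroup into the right-hand side because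
`(-1)^(b-b') = (-1)^b (-1)^b'` and `((-1)^b')² = 1`.
-/

open Real Complex

/-- The parity-modified double Fourier basis functions X_γ. -/
noncomputable def Xbasis (γ : ℤ × ℤ) (θ φ : ℝ) : ℂ :=
  if Even γ.2 then
    (Real.cos (γ.1 * θ) : ℂ) * Complex.exp (Complex.I * γ.2 * φ)
  else
    Complex.I * (Real.sin (γ.1 * θ) : ℂ) * Complex.exp (Complex.I * γ.2 * φ)

theorem neg_one_zpow_sub {α : Type*} [DivisionRing α] (m n : ℤ) :
    (-1 : α) ^ (m - n) = (-1) ^ m * (-1) ^ n := by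
  rw [sub_eq_add_neg, zpow_add₀ (neg_ne_zero.2 one_ne_zero), ← inv_zpow', inv_neg_one]

theorem neg_one_zpow_mul_self {α : Type*} [DivisionRing α] (n : ℤ) :
    (-1 : α) ^ n * (-1) ^ n = 1 := by
  rw [← neg_one_zpow_sub, sub_self, zpow_zero]

noncomputable def planeWave (a b : ℤ) (θ φ : ℝ) : ℂ := exp ((a * θ + b * φ) * I)

theorem planeWave_mul_conj (a b a' b' : ℤ) (θ φ : ℝ) :
    planeWave a b θ φ * starRingEnd ℂ (planeWave a' b' θ φ) =
      planeWave (a - a') (b - b') θ φ := by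
  rw [planeWave, planeWave, planeWave, ← exp_conj, ← Complex.exp_add]
  simp only [map_mul, map_add, conj_ofReal, conj_I, map_intCast]
  push_cast
  ring_nf

theorem Xbasis_eq_planeWave (a b : ℤ) (θ φ : ℝ) :
    Xbasis (a, b) θ φ = (planeWave a b θ φ + (-1) ^ b * planeWave (-a) b θ φ) / 2 := by
  simp only [Xbasis, planeWave, add_mul, Complex.exp_add]
  split_ifs with h
  · rw [h.neg_one_zpow, ofReal_cos, Complex.cos]
    push_cast
    ring_nf
  · rw [(Int.not_even_iff_odd.1 h).neg_one_zpow, ofReal_sin, Complex.sin]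
    push_cast
    ring_nf
    rw [I_sq]
    ring

theorem stmt11 (γ γ' : ℤ × ℤ) (θ φ : ℝ) :
    Xbasis γ θ φ * (starRingEnd ℂ) (Xbasis γ' θ φ) =
      (1 / 2) * (Xbasis (γ.1 - γ'.1, γ.2 - γ'.2) θ φ +
        (-1 : ℂ) ^ γ'.2 * Xbasis (γ.1 + γ'.1, γ.2 - γ'.2) θ φ) := by
  obtain ⟨a, b⟩ := γ
  obtain ⟨a', b'⟩ := γ'
  simp only [Xbasis_eq_planeWave, map_div₀, map_add, map_mul, map_ofNat, map_zpow₀, map_neg,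
    map_one, neg_one_zpow_sub, neg_sub', neg_add', sub_neg_eq_add]
  have hplus := planeWave_mul_conj a b (-a') b' θ φ
  have hminus := planeWave_mul_conj (-a) b (-a') b' θ φ
  rw [sub_neg_eq_add] at hplus hminus
  linear_combination (1 / 4 : ℂ) * (planeWave_mul_conj a b a' b' θ φ + (-1) ^ b' * hplus
      + (-1) ^ b * planeWave_mul_conj (-a) b a' b' θ φ + (-1) ^ b * (-1) ^ b' * hminus)
    - (1 / 4 : ℂ) * (-1) ^ b * planeWave (-a - a') (b - b') θ φ * neg_one_zpow_mul_self (α := ℂ) b'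
end

section
/- Let m1, m2 be positive integers with m2 even and g = gcd(m1,m2). The spectral index set Γ(m) = Γ̄(m) \ Γ^U has exactly m1 m2 elements, where Γ̄(m) = {γ ∈ ℕ×ℤ : 1 ≤ γ1 ≤ m1, γ1/m1 + |γ2|/m2 ≤ 1} ∪ {(0,γ2) : γ2 ∈ 2ℤ, |γ2| < m2} and Γ^U = {γ ∈ Γ̄(m) : γ1/m1 + γ2/m2 = 1, γ2 ≠ 0}. Moreover #Γ̄(m) = m1 m2 + g − 1 and #Γ^U = g − 1. -/
/-- The extended spectral index set Γ̄(m). -/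
def GammaBar (m1 m2 : ℕ) : Set (ℤ × ℤ) :=
  {γ | (1 ≤ γ.1 ∧ γ.1 ≤ (m1 : ℤ) ∧ (γ.1 : ℝ) / m1 + (|γ.2| : ℝ) / m2 ≤ 1) ∨
       (γ.1 = 0 ∧ Even γ.2 ∧ |γ.2| < (m2 : ℤ))}

/-- The subset Γ^U of Γ̄(m). -/
def GammaU (m1 m2 : ℕ) : Set (ℤ × ℤ) :=
  {γ ∈ GammaBar m1 m2 | (γ.1 : ℝ) / m1 + (γ.2 : ℝ) / m2 = 1 ∧ γ.2 ≠ 0}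

/-!
Apart from the m2 - 1 even points on the axis γ1 = 0 and the m1 points (γ1, 0), the set Γ̄(m)
consists of two mirror copies (γ2 ↦ -γ2) of the set T of lattice points (j, k) with j, k ≥ 1
on or below the line j/m1 + k/m2 = 1. The point reflection (j, k) ↦ (m1 - j, m2 - k) of the box
[1, m1 - 1] × [1, m2 - 1] exchanges T with the points of the box on or above that line, so
2 #T = (m1 - 1)(m2 - 1) + #L, where L = Γ^U is the set of lattice points on the open segment.
Writing m1 = g a, m2 = g b with a, b coprime, L = {(a t, b (g - t)) : 0 < t < g}, so #L = g - 1
and #Γ̄(m) = (m2 - 1) + m1 + (m1 - 1)(m2 - 1) + (g - 1) = m1 m2 + g - 1.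
-/

open Finset

namespace LatticeTriangle

variable (a b : ℕ)

noncomputable def box : Finset (ℤ × ℤ) := Icc 1 ((a : ℤ) - 1) ×ˢ Icc 1 ((b : ℤ) - 1)

noncomputable def lowerTriangle : Finset (ℤ × ℤ) :=
  (box a b).filter fun p => a * p.2 + b * p.1 ≤ a * b

noncomputable def upperTriangle : Finset (ℤ × ℤ) :=
  (box a b).filter fun p => a * b ≤ a * p.2 + b * p.1

noncomputable def hypotenuse : Finset (ℤ × ℤ) :=
  (box a b).filter fun p => a * p.2 + b * p.1 = a * b

variable {a b}

theorem one_le_of_mem_box {p : ℤ × ℤ} (hp : p ∈ box a b) : 1 ≤ p.1 ∧ 1 ≤ p.2 := by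
  simp only [box, mem_product, mem_Icc] at hp
  exact ⟨hp.1.1, hp.2.1⟩

theorem mem_box_of_le (ha : 0 < a) (hb : 0 < b) {p : ℤ × ℤ} (h1 : 1 ≤ p.1) (h2 : 1 ≤ p.2)
    (h : a * p.2 + b * p.1 ≤ a * b) : p ∈ box a b := by
  have ha' : (0 : ℤ) < a := by exact_mod_cast ha
  have hb' : (0 : ℤ) < b := by exact_mod_cast hb
  simp only [box, mem_product, mem_Icc]
  refine ⟨⟨h1, ?_⟩, h2, ?_⟩ <;> nlinarith

theorem mem_lowerTriangle (ha : 0 < a) (hb : 0 < b) (p : ℤ × ℤ) :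
    p ∈ lowerTriangle a b ↔ 1 ≤ p.1 ∧ 1 ≤ p.2 ∧ a * p.2 + b * p.1 ≤ a * b := by
  rw [lowerTriangle, mem_filter]
  exact ⟨fun ⟨hp, h⟩ => ⟨(one_le_of_mem_box hp).1, (one_le_of_mem_box hp).2, h⟩,
    fun ⟨h1, h2, h⟩ => ⟨mem_box_of_le ha hb h1 h2 h, h⟩⟩

theorem mem_hypotenuse (ha : 0 < a) (hb : 0 < b) (p : ℤ × ℤ) :
    p ∈ hypotenuse a b ↔ 1 ≤ p.1 ∧ 1 ≤ p.2 ∧ a * p.2 + b * p.1 = a * b := by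
  rw [hypotenuse, mem_filter]
  exact ⟨fun ⟨hp, h⟩ => ⟨(one_le_of_mem_box hp).1, (one_le_of_mem_box hp).2, h⟩,
    fun ⟨h1, h2, h⟩ => ⟨mem_box_of_le ha hb h1 h2 h.le, h⟩⟩

theorem lowerTriangle_union_upperTriangle :
    lowerTriangle a b ∪ upperTriangle a b = box a b := by
  ext p
  simp only [lowerTriangle, upperTriangle, mem_union, mem_filter]
  have := le_total ((a : ℤ) * p.2 + b * p.1) (a * b)
  tauto

theorem lowerTriangle_inter_upperTriangle :
    lowerTriangle a b ∩ upperTriangle a b = hypotenuse a b := by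
  ext p
  simp only [lowerTriangle, upperTriangle, hypotenuse, mem_inter, mem_filter, le_antisymm_iff]
  tauto

theorem card_upperTriangle : #(upperTriangle a b) = #(lowerTriangle a b) := by
  refine card_nbij' (fun p => (a - p.1, b - p.2)) (fun p => (a - p.1, b - p.2))
    ?_ ?_ (fun p _ => by simp) (fun p _ => by simp)
  all_goals
    intro p hp
    simp only [mem_coe, upperTriangle, lowerTriangle, box, mem_filter, mem_product,
      mem_Icc] at hp ⊢
    refine ⟨⟨⟨?_, ?_⟩, ?_, ?_⟩, ?_⟩ <;> linarith

theorem card_hypotenuse (ha : 0 < a) (hb : 0 < b) : #(hypotenuse a b) = a.gcd b - 1 := by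
  obtain ⟨g, a', b', hg, hcop, rfl, rfl⟩ := Nat.exists_coprime' (Nat.gcd_pos_of_pos_left b ha)
  rw [Nat.gcd_mul_right, hcop.gcd_eq_one, one_mul]
  have ha' : (0 : ℤ) < a' := by exact_mod_cast Nat.pos_of_mul_pos_right ha
  have hb' : (0 : ℤ) < b' := by exact_mod_cast Nat.pos_of_mul_pos_right hb
  have hg' : (0 : ℤ) < g := by exact_mod_cast hg
  suffices #(Ioo (0 : ℤ) g) = #(hypotenuse (a' * g) (b' * g)) by
    rw [← this, Int.card_Ioo]; omega
  refine card_bij (fun t _ => (a' * t, b' * (g - t))) ?_ ?_ ?_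
  · intro t ht
    rw [mem_Ioo] at ht
    rw [mem_hypotenuse ha hb]
    push_cast
    refine ⟨?_, ?_, by ring⟩ <;> nlinarith
  · intro s _ t _ h
    exact mul_left_cancel₀ ha'.ne' (Prod.ext_iff.1 h).1
  · rintro ⟨j, k⟩ hp
    rw [mem_hypotenuse ha hb] at hp
    obtain ⟨hj, hk, h⟩ := hp
    push_cast at h
    -- cancelling `g` leaves `a' k + b' j = a' b' g`, so the coprime `a'` divides `j`
    have h' : (a' : ℤ) * k + b' * j = a' * b' * g := by
      apply mul_right_cancel₀ hg'.ne'; linear_combination h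
    obtain ⟨t, rfl⟩ : (a' : ℤ) ∣ j := (Nat.isCoprime_iff_coprime.2 hcop).dvd_of_dvd_mul_left
      ⟨b' * g - k, by linear_combination h'⟩
    have hk' : k = b' * (g - t) := mul_left_cancel₀ ha'.ne' (by linear_combination h')
    subst hk'
    exact ⟨t, mem_Ioo.2 ⟨pos_of_mul_pos_right (by linarith) ha'.le,
      sub_pos.1 (pos_of_mul_pos_right (by linarith) hb'.le)⟩, rfl⟩

theorem two_mul_card_lowerTriangle (ha : 0 < a) (hb : 0 < b) :
    2 * #(lowerTriangle a b) = (a - 1) * (b - 1) + (a.gcd b - 1) := by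
  have h := card_union_add_card_inter (lowerTriangle a b) (upperTriangle a b)
  rw [lowerTriangle_union_upperTriangle, lowerTriangle_inter_upperTriangle, card_upperTriangle,
    card_hypotenuse ha hb, box, card_product, Int.card_Icc, Int.card_Icc] at h
  rw [two_mul, ← h]
  congr 2 <;> omega

end LatticeTriangle

open LatticeTriangle

namespace SpectralIndexSet

theorem intCast_div_add_div_le_one_iff {m n : ℕ} (hm : 0 < m) (hn : 0 < n) (x y : ℤ) :
    (x : ℝ) / m + (y : ℝ) / n ≤ 1 ↔ (m : ℤ) * y + n * x ≤ m * n := by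
  rw [div_add_div _ _ (by positivity) (by positivity), div_le_one (by positivity)]
  norm_cast
  rw [mul_comm x, add_comm]

theorem intCast_div_add_div_eq_one_iff {m n : ℕ} (hm : 0 < m) (hn : 0 < n) (x y : ℤ) :
    (x : ℝ) / m + (y : ℝ) / n = 1 ↔ (m : ℤ) * y + n * x = m * n := by
  rw [div_add_div _ _ (by positivity) (by positivity), div_eq_one_iff_eq (by positivity)]
  norm_cast
  rw [mul_comm x, add_comm]

noncomputable def axisPart (m2 : ℕ) : Finset (ℤ × ℤ) :=
  {0} ×ˢ (Ioo (-(m2 : ℤ)) m2).filter Even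

noncomputable def offAxisPart (m1 m2 : ℕ) : Finset (ℤ × ℤ) :=
  (Icc 1 (m1 : ℤ) ×ˢ {0} ∪ lowerTriangle m1 m2) ∪
    (lowerTriangle m1 m2).map ((Equiv.refl ℤ).prodCongr (Equiv.neg ℤ)).toEmbedding

variable {m1 m2 : ℕ}

theorem mem_offAxisPart (hm1 : 0 < m1) (hm2 : 0 < m2) (p : ℤ × ℤ) :
    p ∈ offAxisPart m1 m2 ↔
      1 ≤ p.1 ∧ p.1 ≤ m1 ∧ m1 * |p.2| + m2 * p.1 ≤ m1 * m2 := by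
  obtain ⟨j, k⟩ := p
  have hm1' : (0 : ℤ) < m1 := by exact_mod_cast hm1
  have hm2' : (0 : ℤ) < m2 := by exact_mod_cast hm2
  simp only [offAxisPart, mem_union, mem_product, mem_Icc, mem_singleton, mem_map_equiv,
    Equiv.prodCongr_symm, Equiv.prodCongr_apply, Prod.map, Equiv.refl_symm, Equiv.refl_apply,
    Equiv.neg_symm, Equiv.neg_apply, mem_lowerTriangle hm1 hm2]
  rcases lt_trichotomy k 0 with hk | rfl | hk
  · rw [abs_of_neg hk]
    constructor
    · rintro ((⟨-, h⟩ | ⟨-, h, -⟩) | ⟨hj, -, h⟩)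
      · omega
      · omega
      · exact ⟨hj, by nlinarith, h⟩
    · rintro ⟨hj, -, h⟩; exact Or.inr ⟨hj, by omega, h⟩
  · simp only [abs_zero, mul_zero, zero_add]
    constructor
    · rintro ((⟨⟨hj, hj'⟩, -⟩ | ⟨-, h, -⟩) | ⟨-, h, -⟩)
      · exact ⟨hj, hj', by nlinarith⟩
      all_goals omega
    · rintro ⟨hj, hj', -⟩; exact Or.inl (Or.inl ⟨⟨hj, hj'⟩, trivial⟩)
  · rw [abs_of_pos hk]
    constructor
    · rintro ((⟨-, h⟩ | ⟨hj, -, h⟩) | ⟨-, h, -⟩)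
      · omega
      · exact ⟨hj, by nlinarith, h⟩
      · omega
    · rintro ⟨hj, -, h⟩; exact Or.inl (Or.inr ⟨hj, by omega, h⟩)

theorem gammaBar_eq (hm1 : 0 < m1) (hm2 : 0 < m2) :
    GammaBar m1 m2 = ↑(axisPart m2 ∪ offAxisPart m1 m2) := by
  ext ⟨j, k⟩
  simp only [GammaBar, Set.mem_ofPred_eq, coe_union, Set.mem_union, mem_coe, axisPart,
    mem_product, mem_singleton, mem_filter, mem_Ioo, abs_lt, mem_offAxisPart hm1 hm2,
    ← Int.cast_abs, intCast_div_add_div_le_one_iff hm1 hm2]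
  tauto

theorem gammaU_eq (hm1 : 0 < m1) (hm2 : 0 < m2) : GammaU m1 m2 = ↑(hypotenuse m1 m2) := by
  have hm1' : (0 : ℤ) < m1 := by exact_mod_cast hm1
  have hm2' : (0 : ℤ) < m2 := by exact_mod_cast hm2
  ext ⟨j, k⟩
  simp only [GammaU, GammaBar, Set.mem_ofPred_eq, mem_coe, mem_hypotenuse hm1 hm2, ← Int.cast_abs,
    intCast_div_add_div_le_one_iff hm1 hm2, intCast_div_add_div_eq_one_iff hm1 hm2]
  constructor
  · rintro ⟨⟨hj, -, hle⟩ | ⟨rfl, -, habs⟩, heq, hk⟩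
    · have : 0 ≤ k := by nlinarith [le_abs_self k, abs_nonneg k]
      exact ⟨hj, by omega, heq⟩
    · have : k = m2 := mul_left_cancel₀ hm1'.ne' (by linarith)
      have := le_abs_self k
      omega
  · rintro ⟨hj, hk, heq⟩
    refine ⟨Or.inl ⟨hj, by nlinarith, ?_⟩, heq, by omega⟩
    rw [abs_of_pos hk]
    exact heq.le

theorem card_axisPart (heven : Even m2) : #(axisPart m2) = m2 - 1 := by
  obtain ⟨n, rfl⟩ := heven
  have hdouble : (Ioo (-((n + n : ℕ) : ℤ)) (n + n : ℕ)).filter Even =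
      (Ioo (-(n : ℤ)) n).image (2 * ·) := by
    ext k
    simp only [mem_filter, mem_Ioo, mem_image, Int.even_iff]
    constructor
    · rintro ⟨⟨h1, h2⟩, h3⟩
      exact ⟨k / 2, by omega, by omega⟩
    · rintro ⟨t, ht, rfl⟩
      omega
  rw [axisPart, card_product, card_singleton, one_mul, hdouble,
    card_image_of_injective _ (mul_right_injective₀ two_ne_zero), Int.card_Ioo]
  omega

theorem card_offAxisPart (hm1 : 0 < m1) (hm2 : 0 < m2) :
    #(offAxisPart m1 m2) = m1 + 2 * #(lowerTriangle m1 m2) := by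
  rw [offAxisPart, card_union_of_disjoint, card_union_of_disjoint, card_map, card_product,
    Int.card_Icc, card_singleton]
  · omega
  all_goals
    rw [disjoint_left]
    intro p
    simp only [mem_union, mem_product, mem_singleton, mem_map_equiv, mem_lowerTriangle hm1 hm2,
      Equiv.prodCongr_symm, Equiv.prodCongr_apply, Prod.map, Equiv.refl_symm, Equiv.refl_apply,
      Equiv.neg_symm, Equiv.neg_apply]
    omega

theorem ncard_gammaBar (hm1 : 0 < m1) (hm2 : 0 < m2) (heven : Even m2) :
    (GammaBar m1 m2).ncard = m1 * m2 + m1.gcd m2 - 1 := by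
  have hdisj : Disjoint (axisPart m2) (offAxisPart m1 m2) := by
    rw [disjoint_left]
    rintro p hp hp'
    simp only [axisPart, mem_product, mem_singleton] at hp
    have := ((mem_offAxisPart hm1 hm2 p).1 hp').1
    omega
  have hlower := two_mul_card_lowerTriangle hm1 hm2
  have hg := Nat.gcd_pos_of_pos_left m2 hm1
  rw [gammaBar_eq hm1 hm2, Set.ncard_coe_finset, card_union_of_disjoint hdisj, card_axisPart heven,
    card_offAxisPart hm1 hm2]
  zify [hm1, hm2, hg, (by omega : 1 ≤ m1 * m2 + m1.gcd m2)] at hlower ⊢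
  linear_combination hlower

theorem ncard_gammaU (hm1 : 0 < m1) (hm2 : 0 < m2) : (GammaU m1 m2).ncard = m1.gcd m2 - 1 := by
  rw [gammaU_eq hm1 hm2, Set.ncard_coe_finset, card_hypotenuse hm1 hm2]

end SpectralIndexSet

open SpectralIndexSet

theorem stmt13 (m1 m2 : ℕ) (hm1 : 0 < m1) (hm2 : 0 < m2) (heven : Even m2)
    (g : ℕ) (hg : g = Nat.gcd m1 m2) :
    Set.ncard (GammaBar m1 m2 \ GammaU m1 m2) = m1 * m2 ∧
    Set.ncard (GammaBar m1 m2) = m1 * m2 + g - 1 ∧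
    Set.ncard (GammaU m1 m2) = g - 1 := by
  subst hg
  have hsub : GammaU m1 m2 ⊆ GammaBar m1 m2 := fun _ h => h.1
  have hfin : (GammaU m1 m2).Finite := by
    rw [gammaU_eq hm1 hm2]
    exact finite_toSet _
  have hgcd := Nat.gcd_pos_of_pos_left m2 hm1
  refine ⟨?_, ncard_gammaBar hm1 hm2 heven, ncard_gammaU hm1 hm2⟩
  rw [Set.ncard_sdiff hsub hfin, ncard_gammaBar hm1 hm2 heven, ncard_gammaU hm1 hm2]
  omega
end
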